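/- arXiv:1903.03460 — 2 statements merged into one kernel-verified Lean document; each statement's English description precedes it below -/
import Mathlib

section
/- Fix an integer n ≥ 1. Let Z = {A ∈ Mat_{n×n}(ℝ) : ‖A‖ = 1, det A ≥ 0}, and define A ~ B iff there exists Q ∈ SO(n) with B = Q·A. Then the quotient space Z/~ is homeomorphic to the closed ball of dimension (n² + n − 2)/2. -/
/-!
`A ↦ AᵀA` identifies `Z/SO(n)` with the set of density matrices `{P ⪰ 0, tr P = 1}`. Matrices
with the same Gram matrix differ by an orthogonal factor, namely an isometric extension of
`Ax ↦ Bx` off the range of `A`; if that factor has determinant `-1`, then `det A = 0` and a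
reflection fixing the range of `A` repairs the sign. Every density matrix is `(√P)ᵀ √P`.
The density matrices form a compact convex set spanning an affine space of dimension
`n(n+1)/2 - 1` and containing a neighbourhood of `1/n` in it, so gauge rescaling maps them onto a
closed ball.
-/

open Matrix Module Set Topology

theorem LinearMap.exists_linearIsometry_comp_eq_of_norm_eq {𝕜 U V : Type*} [RCLike 𝕜]
    [AddCommGroup U] [Module 𝕜 U] [NormedAddCommGroup V] [InnerProductSpace 𝕜 V]
    [FiniteDimensional 𝕜 V] {a b : U →ₗ[𝕜] V} (h : ∀ x, ‖a x‖ = ‖b x‖) :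
    ∃ q : V →ₗᵢ[𝕜] V, ∀ x, q (a x) = b x := by
  have hker : LinearMap.ker a ≤ LinearMap.ker b := fun x hx => by
    rw [LinearMap.mem_ker, ← norm_eq_zero, ← h, norm_eq_zero]
    exact hx
  let L : LinearMap.range a →ₗ[𝕜] V :=
    (LinearMap.ker a).liftQ b hker ∘ₗ a.quotKerEquivRange.symm.toLinearMap
  have hL : ∀ x, L ⟨a x, LinearMap.mem_range_self a x⟩ = b x := fun x => by
    simp [L, LinearMap.quotKerEquivRange_symm_apply_image]
  let L' : LinearMap.range a →ₗᵢ[𝕜] V :=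
    { L with norm_map' := by rintro ⟨_, x, rfl⟩; exact (congrArg norm (hL x)).trans (h x).symm }
  exact ⟨L'.extend, fun x => (L'.extend_apply ⟨a x, _⟩).trans (hL x)⟩

variable {ι : Type*} [Fintype ι]

theorem Matrix.trace_transpose_mul_self (A : Matrix ι ι ℝ) :
    (Aᵀ * A).trace = ∑ i, ∑ j, A i j ^ 2 := by
  simp only [trace, diag_apply, mul_apply, transpose_apply, sq]
  exact Finset.sum_comm

theorem Matrix.posSemidef_transpose_mul_self (A : Matrix ι ι ℝ) : (Aᵀ * A).PosSemidef := by
  simpa only [conjTranspose_eq_transpose_of_trivial] using posSemidef_conjTranspose_mul_self A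

variable (ι) in
def densityMatrices : Set (Matrix ι ι ℝ) := {P | P.PosSemidef ∧ P.trace = 1}

theorem convex_densityMatrices : Convex ℝ (densityMatrices ι) := by
  rintro P ⟨hP, hPtr⟩ S ⟨hS, hStr⟩ a b ha hb hab
  exact ⟨(hP.smul ha).add (hS.smul hb), by simp [hPtr, hStr, hab]⟩

section Symmetric

variable (R ι : Type*) [CommSemiring R] [Fintype ι]

def symmetricMatrices : Submodule R (Matrix ι ι R) where
  carrier := {M | M.IsSymm}
  add_mem' := IsSymm.add
  zero_mem' := isSymm_zero
  smul_mem' c _ h := h.smul c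

def symmetricMatricesEquivSym2 : symmetricMatrices R ι ≃ₗ[R] (Sym2 ι → R) where
  toFun M := Sym2.lift ⟨M.1, fun i j => M.2.apply j i⟩
  invFun f := ⟨of fun i j => f s(i, j), IsSymm.ext fun i j => by simp [Sym2.eq_swap]⟩
  map_add' M N := by ext z; induction z; simp
  map_smul' c M := by ext z; induction z; simp
  left_inv M := by ext i j; simp
  right_inv f := by ext z; induction z; simp

theorem finrank_symmetricMatrices [StrongRankCondition R] :
    finrank R (symmetricMatrices R ι) = (Fintype.card ι + 1).choose 2 := by
  rw [(symmetricMatricesEquivSym2 R ι).finrank_eq, finrank_fintype_fun_eq_card, Sym2.card]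

end Symmetric

variable (ι) in
def tracelessSymmetricMatrices : Submodule ℝ (Matrix ι ι ℝ) :=
  symmetricMatrices ℝ ι ⊓ LinearMap.ker (traceLinearMap ι ℝ ℝ)

theorem mem_tracelessSymmetricMatrices {M : Matrix ι ι ℝ} :
    M ∈ tracelessSymmetricMatrices ι ↔ M.IsSymm ∧ M.trace = 0 :=
  Iff.rfl

variable [DecidableEq ι]

theorem Matrix.norm_toEuclideanCLM_apply_sq (A : Matrix ι ι ℝ) (x : EuclideanSpace ℝ ι) :
    ‖toEuclideanCLM (𝕜 := ℝ) A x‖ ^ 2 = inner ℝ x (toEuclideanCLM (𝕜 := ℝ) (Aᵀ * A) x) := by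
  rw [map_mul, ← conjTranspose_eq_transpose_of_trivial, ← star_eq_conjTranspose, map_star,
    ContinuousLinearMap.star_eq_adjoint, mul_apply_eq_comp,
    ContinuousLinearMap.adjoint_inner_right, real_inner_self_eq_norm_sq]

theorem Matrix.transpose_mul_self_eq_one_of_inner_map_map {Q : Matrix ι ι ℝ}
    (hQ : ∀ x y, inner ℝ (toEuclideanCLM (𝕜 := ℝ) Q x) (toEuclideanCLM (𝕜 := ℝ) Q y) =
      inner ℝ x y) :
    Qᵀ * Q = 1 := by
  apply EquivLike.injective (toEuclideanCLM (n := ι) (𝕜 := ℝ))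
  rw [map_mul, map_one, ← conjTranspose_eq_transpose_of_trivial, ← star_eq_conjTranspose, map_star]
  ext1 x
  refine ext_inner_left ℝ fun y => ?_
  rw [ContinuousLinearMap.star_eq_adjoint, mul_apply_eq_comp,
    ContinuousLinearMap.adjoint_inner_right, hQ, one_apply_eq_self]

theorem Matrix.exists_orthogonal_mul_eq_of_transpose_mul_self_eq {A B : Matrix ι ι ℝ}
    (h : Aᵀ * A = Bᵀ * B) : ∃ Q : Matrix ι ι ℝ, Qᵀ * Q = 1 ∧ B = Q * A := by
  obtain ⟨q, hq⟩ := LinearMap.exists_linearIsometry_comp_eq_of_norm_eq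
    (a := (toEuclideanCLM (n := ι) (𝕜 := ℝ) A).toLinearMap)
    (b := (toEuclideanCLM (n := ι) (𝕜 := ℝ) B).toLinearMap) fun x => by
      simp only [ContinuousLinearMap.coe_coe]
      rw [← sq_eq_sq₀ (norm_nonneg _) (norm_nonneg _), norm_toEuclideanCLM_apply_sq,
        norm_toEuclideanCLM_apply_sq, h]
  set Q := (toEuclideanCLM (n := ι) (𝕜 := ℝ)).symm q.toContinuousLinearMap
  have hQ : toEuclideanCLM (𝕜 := ℝ) Q = q.toContinuousLinearMap :=
    StarAlgEquiv.apply_symm_apply _ _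
  refine ⟨Q, transpose_mul_self_eq_one_of_inner_map_map fun x y => ?_, ?_⟩
  · rw [hQ]
    exact q.inner_map_map x y
  apply EquivLike.injective (toEuclideanCLM (n := ι) (𝕜 := ℝ))
  rw [map_mul, hQ]
  ext1 x
  exact (hq x).symm

theorem Matrix.exists_orthogonal_det_eq_neg_one_mul_eq_self {A : Matrix ι ι ℝ} (hA : A.det = 0) :
    ∃ H : Matrix ι ι ℝ, Hᵀ * H = 1 ∧ H.det = -1 ∧ H * A = A := by
  obtain ⟨v, hv, hvA⟩ := exists_vecMul_eq_zero_iff.mpr hA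
  have hvv : v ⬝ᵥ v ≠ 0 := mt dotProduct_self_eq_zero.mp hv
  set c := 2 / (v ⬝ᵥ v)
  have hc : c * (v ⬝ᵥ v) = 2 := div_mul_cancel₀ 2 hvv
  -- the Householder reflection in the hyperplane `vᗮ`, which contains the columns of `A`
  refine ⟨1 - c • vecMulVec v v, ?_, ?_, ?_⟩
  · have hsq : vecMulVec v v * vecMulVec v v = (v ⬝ᵥ v) • vecMulVec v v := by
      rw [vecMulVec_mul_vecMulVec, vecMulVec_smul]
    rw [transpose_sub, transpose_one, transpose_smul, transpose_vecMulVec, sub_mul, mul_sub,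
      mul_sub, one_mul, mul_one, one_mul, smul_mul_smul_comm, hsq, smul_smul, mul_assoc, hc]
    module
  · rw [sub_eq_add_neg, ← neg_smul, ← smul_vecMulVec, vecMulVec_eq Unit,
      det_one_add_replicateCol_mul_replicateRow, dotProduct_smul, smul_eq_mul]
    linear_combination -hc
  · rw [sub_mul, one_mul, smul_mul, vecMulVec_mul, hvA, vecMulVec_zero, smul_zero, sub_zero]

theorem Matrix.exists_specialOrthogonal_mul_eq_of_transpose_mul_self_eq {A B : Matrix ι ι ℝ}
    (h : Aᵀ * A = Bᵀ * B) (hA : 0 ≤ A.det) (hB : 0 ≤ B.det) :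
    ∃ Q : Matrix ι ι ℝ, Qᵀ * Q = 1 ∧ Q.det = 1 ∧ B = Q * A := by
  obtain ⟨Q, hQ, rfl⟩ := exists_orthogonal_mul_eq_of_transpose_mul_self_eq h
  have hdet : Q.det * Q.det = 1 := by
    simpa only [det_mul, det_transpose, det_one] using congrArg det hQ
  rcases mul_self_eq_one_iff.mp hdet with hQ1 | hQ1
  · exact ⟨Q, hQ, hQ1, rfl⟩
  have hA0 : A.det = 0 := by
    rw [det_mul, hQ1] at hB
    linarith
  obtain ⟨H, hH, hH1, hHA⟩ := exists_orthogonal_det_eq_neg_one_mul_eq_self hA0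
  refine ⟨Q * H, ?_, ?_, ?_⟩
  · rw [transpose_mul, mul_assoc, ← mul_assoc Qᵀ, hQ, one_mul, hH]
  · rw [det_mul, hQ1, hH1]
    norm_num
  · rw [mul_assoc, hHA]

variable (ι) in
def detNonnegUnitSphere : Set (Matrix ι ι ℝ) := {M | √(∑ i, ∑ j, M i j ^ 2) = 1 ∧ 0 ≤ M.det}

def SOOrbitRel (A B : Matrix ι ι ℝ) : Prop :=
  ∃ Q : Matrix ι ι ℝ, Qᵀ * Q = 1 ∧ Q.det = 1 ∧ B = Q * A

section SupNorm

attribute [local instance] Matrix.normedAddCommGroup Matrix.normedSpace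

theorem isCompact_detNonnegUnitSphere : IsCompact (detNonnegUnitSphere ι) := by
  refine Metric.isCompact_of_isClosed_isBounded ?_ ?_
  · exact (isClosed_eq (by fun_prop) continuous_const).inter
      (isClosed_le continuous_const continuous_id.matrix_det)
  refine (Metric.isBounded_closedBall (x := 0) (r := 1)).subset fun M hM => ?_
  rw [mem_closedBall_zero_iff, Matrix.norm_le_iff zero_le_one]
  intro i j
  have hsum : ∑ i, ∑ j, M i j ^ 2 = 1 := Real.sqrt_eq_one.mp hM.1
  have : M i j ^ 2 ≤ 1 := hsum ▸ (Finset.single_le_sum (f := fun j => M i j ^ 2)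
    (fun _ _ => sq_nonneg _) (Finset.mem_univ j)).trans
    (Finset.single_le_sum (f := fun i => ∑ j, M i j ^ 2)
      (fun _ _ => Finset.sum_nonneg fun _ _ => sq_nonneg _) (Finset.mem_univ i))
  simpa [Real.norm_eq_abs, ← sq_le_one_iff_abs_le_one] using this

end SupNorm

instance : CompactSpace (detNonnegUnitSphere ι) :=
  isCompact_iff_compactSpace.mp isCompact_detNonnegUnitSphere

def transposeMulSelf (A : detNonnegUnitSphere ι) : densityMatrices ι :=
  ⟨A.1ᵀ * A.1, posSemidef_transpose_mul_self _, by
    rw [trace_transpose_mul_self, ← Real.sqrt_eq_one]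
    exact A.2.1⟩

theorem transposeMulSelf_eq_of_SOOrbitRel {A B : detNonnegUnitSphere ι}
    (h : SOOrbitRel A.1 B.1) : transposeMulSelf A = transposeMulSelf B := by
  obtain ⟨Q, hQ, -, hB⟩ := h
  refine Subtype.ext ?_
  simp only [transposeMulSelf, hB, transpose_mul, mul_assoc, ← mul_assoc Qᵀ, hQ, one_mul]

theorem transposeMulSelf_surjective : Function.Surjective (transposeMulSelf (ι := ι)) := by
  open scoped MatrixOrder in
  rintro ⟨P, hP, htr⟩
  have hS : (CFC.sqrt P).PosSemidef := (CFC.sqrt_nonneg P).posSemidef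
  have hSS : (CFC.sqrt P)ᵀ * CFC.sqrt P = P := by
    rw [← conjTranspose_eq_transpose_of_trivial, hS.1.eq, CFC.sqrt_mul_sqrt_self P hP.nonneg]
  refine ⟨⟨CFC.sqrt P, ?_, hS.det_nonneg⟩, Subtype.ext hSS⟩
  rw [Real.sqrt_eq_one, ← trace_transpose_mul_self, hSS, htr]

variable (ι) in
noncomputable def quotHomeomorphDensityMatrices :
    Quot (fun A B : detNonnegUnitSphere ι => SOOrbitRel A.1 B.1) ≃ₜ densityMatrices ι :=
  Continuous.homeoOfEquivCompactToT2 (f := Equiv.ofBijective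
    (Quot.lift transposeMulSelf fun _ _ => transposeMulSelf_eq_of_SOOrbitRel)
    ⟨fun x y => Quot.induction_on₂ x y fun A B h => Quot.sound <|
        exists_specialOrthogonal_mul_eq_of_transpose_mul_self_eq (congrArg Subtype.val h)
          A.2.2 B.2.2,
      (Quot.surjective_lift _).mpr transposeMulSelf_surjective⟩)
    (continuous_quot_lift _ (by unfold transposeMulSelf; fun_prop))

theorem isCompact_densityMatrices : IsCompact (densityMatrices ι) :=
  isCompact_iff_compactSpace.mpr (quotHomeomorphDensityMatrices ι).compactSpace

theorem finrank_tracelessSymmetricMatrices_add_one [Nonempty ι] :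
    finrank ℝ (tracelessSymmetricMatrices ι) + 1 = (Fintype.card ι + 1).choose 2 := by
  have htr : traceLinearMap ι ℝ ℝ ∘ₗ (symmetricMatrices ℝ ι).subtype ≠ 0 := fun h => by
    simpa using LinearMap.congr_fun h ⟨1, isSymm_one⟩
  rw [← finrank_symmetricMatrices ℝ, ← Module.Dual.finrank_ker_add_one_of_ne_zero htr,
    LinearMap.ker_comp, ← Submodule.finrank_map_subtype_eq, Submodule.map_comap_subtype]
  rfl

theorem eventually_posSemidef_smul_one_add {c : ℝ} (hc : 0 < c) :
    ∀ᶠ M in 𝓝 (0 : Matrix ι ι ℝ), M.IsSymm → (c • 1 + M).PosSemidef := by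
  have hcont : Continuous fun M : Matrix ι ι ℝ => ‖toEuclideanCLM (n := ι) (𝕜 := ℝ) M‖ :=
    (LinearMap.continuous_of_finiteDimensional
      (toEuclideanCLM (n := ι) (𝕜 := ℝ)).toAlgEquiv.toLinearEquiv.toLinearMap).norm
  filter_upwards [hcont.continuousAt.eventually_lt continuousAt_const (by simpa using hc)]
    with M hM hMsymm
  rw [posSemidef_iff_dotProduct_mulVec]
  refine ⟨isHermitian_iff_isSymm.mpr ((isSymm_one.smul c).add hMsymm), fun x => ?_⟩
  set T := toEuclideanCLM (n := ι) (𝕜 := ℝ) M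
  set y : EuclideanSpace ℝ ι := WithLp.toLp 2 x
  have hTy : |inner ℝ y (T y)| ≤ ‖T‖ * ‖y‖ ^ 2 :=
    (abs_real_inner_le_norm y (T y)).trans (by nlinarith [T.le_opNorm y, norm_nonneg y])
  have hxy : star x ⬝ᵥ (c • 1 + M) *ᵥ x = c * ‖y‖ ^ 2 + inner ℝ y (T y) := by
    rw [star_trivial, ← inner_toEuclideanCLM, map_add, map_smul, map_one]
    simp only [_root_.add_apply, _root_.smul_apply, one_apply_eq_self, inner_add_right,
      real_inner_smul_right, real_inner_self_eq_norm_sq]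
    rfl
  rw [hxy]
  nlinarith [neg_abs_le (inner ℝ y (T y)), sq_nonneg ‖y‖]

theorem Convex.nonempty_homeomorph_closedBall {E : Type*} [NormedAddCommGroup E]
    [NormedSpace ℝ E] {s : Set E} (hc : Convex ℝ s) (hs : IsCompact s)
    (hne : (interior s).Nonempty) : Nonempty (s ≃ₜ Metric.closedBall (0 : E) 1) := by
  obtain ⟨h, -, hcl, -⟩ :=
    exists_homeomorph_image_interior_closure_frontier_eq_unitBall hc hne hs.isBounded
  rw [hs.isClosed.closure_eq] at hcl
  exact ⟨(h.image s).trans (Homeomorph.setCongr hcl)⟩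

noncomputable def Topology.IsClosedEmbedding.preimageHomeomorph {X Y : Type*}
    [TopologicalSpace X] [TopologicalSpace Y] [T2Space Y] {f : X → Y} (hf : IsClosedEmbedding f)
    {s : Set Y} (hs : IsCompact s) (hsf : s ⊆ range f) : f ⁻¹' s ≃ₜ s :=
  haveI := isCompact_iff_compactSpace.mp (hf.isCompact_preimage hs)
  Continuous.homeoOfEquivCompactToT2 (f := Equiv.ofBijective (s.restrictPreimage f)
    ⟨hf.injective.restrictPreimage s, fun y => by
      obtain ⟨x, hx⟩ := hsf y.2
      exact ⟨⟨x, by simp [hx]⟩, Subtype.ext hx⟩⟩)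
    hf.continuous.restrictPreimage

section Chart

variable {F : Type*} [NormedAddCommGroup F] [NormedSpace ℝ F] [FiniteDimensional ℝ F]

theorem nonempty_homeomorph_closedBall_densityMatrices_of_range_eq [Nonempty ι]
    {χ : F →ₗ[ℝ] Matrix ι ι ℝ} (hinj : Function.Injective χ)
    (hrange : LinearMap.range χ = tracelessSymmetricMatrices ι) :
    Nonempty (densityMatrices ι ≃ₜ Metric.closedBall (0 : F) 1) := by
  set c : ℝ := (Fintype.card ι : ℝ)⁻¹
  let f : F →ᵃ[ℝ] Matrix ι ι ℝ := AffineMap.const ℝ F (c • 1) + χ.toAffineMap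
  have hf : ∀ x, f x = c • 1 + χ x := fun x => rfl
  have hχ : ∀ x, (χ x).IsSymm ∧ (χ x).trace = 0 := fun x =>
    mem_tracelessSymmetricMatrices.mp (hrange ▸ LinearMap.mem_range_self χ x)
  have hemb : IsClosedEmbedding f :=
    (Homeomorph.addLeft (c • (1 : Matrix ι ι ℝ))).isClosedEmbedding.comp
      (LinearMap.isClosedEmbedding_of_injective (LinearMap.ker_eq_bot.mpr hinj))
  have hsub : densityMatrices ι ⊆ range f := by
    rintro P ⟨hP, htr⟩
    obtain ⟨x, hx⟩ : P - c • 1 ∈ LinearMap.range χ := by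
      rw [hrange, mem_tracelessSymmetricMatrices]
      refine ⟨(isHermitian_iff_isSymm.mp hP.isHermitian).sub (isSymm_one.smul c), ?_⟩
      simp [htr, c]
    exact ⟨x, by rw [hf, hx, add_sub_cancel]⟩
  have hnhds : f ⁻¹' densityMatrices ι ∈ 𝓝 0 := by
    have hχ0 : Filter.Tendsto χ (𝓝 0) (𝓝 0) := by
      simpa using χ.continuous_of_finiteDimensional.tendsto 0
    filter_upwards [hχ0.eventually (eventually_posSemidef_smul_one_add (c := c) (by positivity))]
      with x hx
    exact ⟨hx (hχ x).1, by simp [hf, (hχ x).2, c]⟩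
  obtain ⟨e⟩ := (convex_densityMatrices.affine_preimage f).nonempty_homeomorph_closedBall
    (hemb.isCompact_preimage isCompact_densityMatrices) ⟨0, mem_interior_iff_mem_nhds.mpr hnhds⟩
  exact ⟨(hemb.preimageHomeomorph isCompact_densityMatrices hsub).symm.trans e⟩

theorem nonempty_homeomorph_closedBall_densityMatrices [Nonempty ι]
    (hF : finrank ℝ F + 1 = (Fintype.card ι + 1).choose 2) :
    Nonempty (densityMatrices ι ≃ₜ Metric.closedBall (0 : F) 1) := by
  have hdim : finrank ℝ F = finrank ℝ (tracelessSymmetricMatrices ι) := by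
    have := finrank_tracelessSymmetricMatrices_add_one (ι := ι)
    omega
  let φ := LinearEquiv.ofFinrankEq F (tracelessSymmetricMatrices ι) hdim
  refine nonempty_homeomorph_closedBall_densityMatrices_of_range_eq
    (χ := (tracelessSymmetricMatrices ι).subtype ∘ₗ φ.toLinearMap)
    (Subtype.val_injective.comp φ.injective) ?_
  rw [LinearMap.range_comp, LinearEquiv.range, Submodule.map_top, Submodule.range_subtype]

end Chart

/-- Orbit space of `Z = {A : ‖A‖ = 1, det A ≥ 0}` by the left `SO(n)`-action is
a closed ball of dimension `(n² + n - 2)/2`. -/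
theorem Z_quotient_SO_homeomorphic_ball (n : ℕ) (hn : 1 ≤ n) :
    Nonempty (Quot
      (fun A B : {M : Matrix (Fin n) (Fin n) ℝ //
          Real.sqrt (∑ i, ∑ j, M i j ^ 2) = 1 ∧ 0 ≤ M.det} =>
        ∃ Q : Matrix (Fin n) (Fin n) ℝ, Qᵀ * Q = 1 ∧ Q.det = 1 ∧ B.1 = Q * A.1)
      ≃ₜ Metric.closedBall (0 : EuclideanSpace ℝ (Fin ((n ^ 2 + n - 2) / 2))) 1) := by
  have : Nonempty (Fin n) := ⟨⟨0, hn⟩⟩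
  have hdim : (n ^ 2 + n - 2) / 2 + 1 = (n + 1).choose 2 := by
    rw [Nat.choose_two_right, Nat.add_sub_cancel, show n ^ 2 + n = (n + 1) * n by ring]
    have : 2 ≤ (n + 1) * n := Nat.mul_le_mul (Nat.succ_le_succ hn) hn
    omega
  obtain ⟨e⟩ := nonempty_homeomorph_closedBall_densityMatrices
    (F := EuclideanSpace ℝ (Fin ((n ^ 2 + n - 2) / 2))) (ι := Fin n)
    (by rw [finrank_euclideanSpace_fin, Fintype.card_fin, hdim])
  exact ⟨(quotHomeomorphDensityMatrices (Fin n)).trans e⟩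
end

section
/- Let S³ = {s ∈ ℍ : |s| = 1} be the group of unit quaternions, and consider the action of T³ on S³ × S³ given by (t₁,t₂,t₃)·(s₁,s₂) = (t₁·s₁·t₃, t₂·s₂·t₃), where t₁,t₂,t₃ are complex numbers of modulus 1 acting via the standard inclusion ℂ ⊂ ℍ. Then the orbit space (S³ × S³)/T³ is homeomorphic to S³. -/
/-- The standard inclusion ℂ ⊂ ℍ : `z = a + b·i ↦ a + b·i ∈ ℍ`. -/
noncomputable def toQ (z : ℂ) : Quaternion ℝ := ⟨z.re, z.im, 0, 0⟩

/-- The group `S³` of unit quaternions. -/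
abbrev S3 : Type := {s : Quaternion ℝ // ‖s‖ = 1}

/-- `(s₁,s₂) ~ (t₁ s₁ t₃, t₂ s₂ t₃)` for unit complex numbers `t₁,t₂,t₃`. -/
def rel15 (x y : S3 × S3) : Prop :=
  ∃ t₁ t₂ t₃ : ℂ, ‖t₁‖ = 1 ∧ ‖t₂‖ = 1 ∧ ‖t₃‖ = 1 ∧
    y.1.1 = toQ t₁ * x.1.1 * toQ t₃ ∧ y.2.1 = toQ t₂ * x.2.1 * toQ t₃

/-!
Write `s = a + b j` with `a b : ℂ`. Then `t₁ s t₃ = t₁ t₃ a + t₁ t̄₃ b j`, so the left circle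
acts by scalars on `(a, b)` and its quotient is the Hopf map `s ↦ (|a|² - |b|², 2 a b̄) ∈ S²`,
while the right circle acts on `S²` by the rotation `h ↦ t₃² h`. The orbit space is therefore
`(S² × S²)/S¹` for the diagonal rotation, classified by the invariants `(x, y, h k̄)`. These fill
the set `orbitModel = {x², y² ≤ 1, |w|² = (1 - x²)(1 - y²)} ⊆ ℝ⁴`, on which `‖v‖² = 1 + x² y²`;
each ray from the origin meets it exactly once, so radial projection is a continuous bijection
from the compact orbit space onto `S³`.
-/

open Complex ComplexConjugate

local notation "ℝ⁴" => EuclideanSpace ℝ (Fin 4)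

noncomputable def Homeomorph.quotOfFibers {X Y : Type*} [TopologicalSpace X] [CompactSpace X]
    [TopologicalSpace Y] [T2Space Y] {r : X → X → Prop} (f : X → Y) (hf : Continuous f)
    (hsurj : Function.Surjective f) (hr : ∀ x y, r x y ↔ f x = f y) : Quot r ≃ₜ Y :=
  have hbij : Function.Bijective (Quot.lift f fun x y h => (hr x y).1 h) :=
    ⟨fun a b => Quot.induction_on₂ a b fun x y h => Quot.sound ((hr x y).2 h),
      fun y => let ⟨x, hx⟩ := hsurj y; ⟨Quot.mk r x, hx⟩⟩
  Continuous.homeoOfEquivCompactToT2 (f := Equiv.ofBijective _ hbij) (continuous_quot_lift _ hf)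

theorem Complex.mul_conj_of_norm_eq_one {u : ℂ} (hu : ‖u‖ = 1) : u * conj u = 1 := by
  rw [mul_conj', hu]; simp

theorem Complex.exists_sq_eq_of_norm_eq_one {c : ℂ} (hc : ‖c‖ = 1) :
    ∃ t : ℂ, ‖t‖ = 1 ∧ t ^ 2 = c := by
  obtain ⟨t, htc⟩ := IsAlgClosed.exists_pow_nat_eq c two_pos
  refine ⟨t, ?_, htc⟩
  rwa [← pow_eq_one_iff_of_nonneg (norm_nonneg t) two_ne_zero, ← norm_pow, htc]

theorem Complex.exists_norm_eq_one_mul_eq {a b a' b' : ℂ} (ha : ‖a'‖ = ‖a‖) (hb : ‖b'‖ = ‖b‖)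
    (h : a' * conj b' = a * conj b) : ∃ t : ℂ, ‖t‖ = 1 ∧ a' = t * a ∧ b' = t * b := by
  set N := ‖a‖ ^ 2 + ‖b‖ ^ 2
  by_cases hN : N = 0
  · have ha0 : ‖a‖ = 0 := by nlinarith [sq_nonneg ‖a‖, sq_nonneg ‖b‖, norm_nonneg a]
    have hb0 : ‖b‖ = 0 := by nlinarith [sq_nonneg ‖a‖, sq_nonneg ‖b‖, norm_nonneg b]
    exact ⟨1, norm_one, by simp_all, by simp_all⟩
  have hNc : (N : ℂ) ≠ 0 := ofReal_ne_zero.2 hN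
  have e1 := mul_conj' a; have e2 := mul_conj' b; have e1' := mul_conj' a'; have e2' := mul_conj' b'
  rw [ha] at e1'; rw [hb] at e2'
  have h' : conj a' * b' = conj a * b := by simpa using congrArg conj h
  -- the unique candidate, `t = ⟪(a, b), (a', b')⟫ / ‖(a, b)‖²`
  set t := (a' * conj a + b' * conj b) / N
  have hA : a' = t * a := by
    rw [div_mul_eq_mul_div, eq_div_iff hNc]; push_cast [N]
    linear_combination (-a') * e1 + b' * h - a' * e2'
  have hB : b' = t * b := by
    rw [div_mul_eq_mul_div, eq_div_iff hNc]; push_cast [N]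
    linear_combination (-b') * e2 + a' * h' - b' * e1'
  refine ⟨t, ?_, hA, hB⟩
  have : ‖t‖ ^ 2 * N = N := by
    simp only [N, mul_add, ← mul_pow, ← norm_mul, ← hA, ← hB, ha, hb]
  rwa [mul_eq_right₀ hN, pow_eq_one_iff_of_nonneg (norm_nonneg t) two_ne_zero] at this

-- `s = cplxA s + cplxB s * j`
def cplxA (s : Quaternion ℝ) : ℂ := s.re + s.imI * I

def cplxB (s : Quaternion ℝ) : ℂ := s.imJ + s.imK * I

theorem ext_cplx {s s' : Quaternion ℝ} (hA : cplxA s = cplxA s') (hB : cplxB s = cplxB s') :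
    s = s' := by
  simp [cplxA, cplxB, Complex.ext_iff] at hA hB
  exact Quaternion.ext _ _ hA.1 hA.2 hB.1 hB.2

theorem norm_cplxA_sq_add_norm_cplxB_sq (s : Quaternion ℝ) :
    ‖cplxA s‖ ^ 2 + ‖cplxB s‖ ^ 2 = ‖s‖ ^ 2 := by
  rw [sq ‖s‖, ← Quaternion.normSq_eq_norm_mul_self, Quaternion.normSq_def', ← normSq_eq_norm_sq,
    ← normSq_eq_norm_sq]
  simp [cplxA, cplxB, Complex.normSq_apply]
  ring

theorem cplxA_toQ_mul (u : ℂ) (s : Quaternion ℝ) : cplxA (toQ u * s) = u * cplxA s := by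
  apply Complex.ext <;> simp only [cplxA, Quaternion.re_mul, Quaternion.imI_mul] <;> simp [toQ]

theorem cplxB_toQ_mul (u : ℂ) (s : Quaternion ℝ) : cplxB (toQ u * s) = u * cplxB s := by
  apply Complex.ext <;> simp only [cplxB, Quaternion.imJ_mul, Quaternion.imK_mul] <;> simp [toQ]

theorem cplxA_mul_toQ (s : Quaternion ℝ) (v : ℂ) : cplxA (s * toQ v) = cplxA s * v := by
  apply Complex.ext <;> simp only [cplxA, Quaternion.re_mul, Quaternion.imI_mul] <;> simp [toQ]

theorem cplxB_mul_toQ (s : Quaternion ℝ) (v : ℂ) : cplxB (s * toQ v) = cplxB s * conj v := by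
  apply Complex.ext <;> simp only [cplxB, Quaternion.imJ_mul, Quaternion.imK_mul] <;> simp [toQ]

theorem continuous_cplxA : Continuous cplxA :=
  (continuous_ofReal.comp Quaternion.continuous_re).add
    ((continuous_ofReal.comp Quaternion.continuous_imI).mul continuous_const)

theorem continuous_cplxB : Continuous cplxB :=
  (continuous_ofReal.comp Quaternion.continuous_imJ).add
    ((continuous_ofReal.comp Quaternion.continuous_imK).mul continuous_const)

theorem norm_toQ (z : ℂ) : ‖toQ z‖ = ‖z‖ := by
  rw [← sq_eq_sq₀ (norm_nonneg _) (norm_nonneg _), ← norm_cplxA_sq_add_norm_cplxB_sq]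
  simp [cplxA, cplxB, toQ]

noncomputable def hopf (s : Quaternion ℝ) : ℝ × ℂ :=
  (‖cplxA s‖ ^ 2 - ‖cplxB s‖ ^ 2, 2 * cplxA s * conj (cplxB s))

theorem hopf_fst_sq_add_norm_snd_sq (s : Quaternion ℝ) :
    (hopf s).1 ^ 2 + ‖(hopf s).2‖ ^ 2 = ‖s‖ ^ 4 := by
  have := norm_cplxA_sq_add_norm_cplxB_sq s
  simp only [hopf, norm_mul, Complex.norm_conj, Complex.norm_ofNat]
  linear_combination (‖s‖ ^ 2 + ‖cplxA s‖ ^ 2 + ‖cplxB s‖ ^ 2) * this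

theorem hopf_toQ_mul {u : ℂ} (hu : ‖u‖ = 1) (s : Quaternion ℝ) : hopf (toQ u * s) = hopf s := by
  have := Complex.mul_conj_of_norm_eq_one hu
  simp only [hopf, cplxA_toQ_mul, cplxB_toQ_mul, norm_mul, hu, one_mul, map_mul, Prod.mk.injEq,
    true_and]
  linear_combination 2 * cplxA s * conj (cplxB s) * this

theorem hopf_mul_toQ {v : ℂ} (hv : ‖v‖ = 1) (s : Quaternion ℝ) :
    hopf (s * toQ v) = ((hopf s).1, v ^ 2 * (hopf s).2) := by
  simp only [hopf, cplxA_mul_toQ, cplxB_mul_toQ, norm_mul, Complex.norm_conj, hv, mul_one,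
    map_mul, Complex.conj_conj, Prod.mk.injEq, true_and]
  ring

theorem exists_toQ_mul_eq_of_hopf_eq {s s' : Quaternion ℝ} (hs : ‖s'‖ = ‖s‖)
    (h : hopf s' = hopf s) : ∃ t : ℂ, ‖t‖ = 1 ∧ s' = toQ t * s := by
  have hN := norm_cplxA_sq_add_norm_cplxB_sq s
  have hN' := norm_cplxA_sq_add_norm_cplxB_sq s'
  simp only [hopf, Prod.mk.injEq] at h
  have hA : ‖cplxA s'‖ = ‖cplxA s‖ := by
    rw [← sq_eq_sq₀ (norm_nonneg _) (norm_nonneg _)]; rw [hs] at hN'; linarith [h.1]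
  have hB : ‖cplxB s'‖ = ‖cplxB s‖ := by
    rw [← sq_eq_sq₀ (norm_nonneg _) (norm_nonneg _)]; rw [hs] at hN'; linarith [h.1]
  have hAB : cplxA s' * conj (cplxB s') = cplxA s * conj (cplxB s) := by
    linear_combination h.2 / 2
  obtain ⟨t, ht, eA, eB⟩ := Complex.exists_norm_eq_one_mul_eq hA hB hAB
  exact ⟨t, ht, ext_cplx (by rw [cplxA_toQ_mul, eA]) (by rw [cplxB_toQ_mul, eB])⟩

theorem exists_hopf_eq {x : ℝ} {h : ℂ} (hxh : x ^ 2 + ‖h‖ ^ 2 = 1) :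
    ∃ s : Quaternion ℝ, ‖s‖ = 1 ∧ hopf s = (x, h) := by
  obtain ⟨c, hc, hch⟩ := Complex.exists_norm_mul_eq_self h
  obtain ⟨t, ht, htc⟩ := Complex.exists_sq_eq_of_norm_eq_one hc
  have hx : x ^ 2 ≤ 1 := by nlinarith [sq_nonneg ‖h‖]
  set α := √((1 + x) / 2)
  set β := √((1 - x) / 2)
  have hα : α ^ 2 = (1 + x) / 2 := Real.sq_sqrt (by nlinarith)
  have hβ : β ^ 2 = (1 - x) / 2 := Real.sq_sqrt (by nlinarith)
  have hαβ : 2 * α * β = ‖h‖ := by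
    rw [← sq_eq_sq₀ (by positivity) (norm_nonneg h)]
    linear_combination 4 * α ^ 2 * hβ + 2 * (1 - x) * hα - hxh
  -- `s₀ = α + β j` has Hopf image `(x, ‖h‖)`; the right factor `t` rotates `‖h‖` to `h`
  let s₀ : Quaternion ℝ := ⟨α, 0, β, 0⟩
  have hA : cplxA s₀ = α := by simp [s₀, cplxA]
  have hB : cplxB s₀ = β := by simp [s₀, cplxB]
  have hs₀ : hopf s₀ = (x, (‖h‖ : ℂ)) := by
    simp only [hopf, hA, hB, Complex.conj_ofReal, Complex.norm_real, Real.norm_eq_abs, sq_abs, hα,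
      hβ, Prod.mk.injEq]
    refine ⟨by ring, by rw [← hαβ]; push_cast; ring⟩
  refine ⟨s₀ * toQ t, ?_, ?_⟩
  · rw [norm_mul, norm_toQ, ht, mul_one, ← pow_eq_one_iff_of_nonneg (norm_nonneg _) two_ne_zero,
      ← norm_cplxA_sq_add_norm_cplxB_sq, hA, hB]
    simp only [Complex.norm_real, Real.norm_eq_abs, sq_abs, hα, hβ]
    ring
  · rw [hopf_mul_toQ ht, hs₀, htc, hch]

theorem continuous_hopf : Continuous hopf := by
  have := continuous_cplxA; have := continuous_cplxB
  unfold hopf; fun_prop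

def pairInvariant (p q : ℝ × ℂ) : ℝ⁴ := !₂[p.1, q.1, (p.2 * conj q.2).re, (p.2 * conj q.2).im]

theorem continuous_pairInvariant :
    Continuous fun pq : (ℝ × ℂ) × (ℝ × ℂ) => pairInvariant pq.1 pq.2 := by
  unfold pairInvariant; fun_prop

theorem pairInvariant_rotate {u : ℂ} (hu : ‖u‖ = 1) (x y : ℝ) (h k : ℂ) :
    pairInvariant (x, u * h) (y, u * k) = pairInvariant (x, h) (y, k) := by
  have hh : u * h * conj (u * k) = h * conj k := by
    rw [map_mul]; linear_combination h * conj k * Complex.mul_conj_of_norm_eq_one hu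
  simp only [pairInvariant, hh]

theorem exists_rotate_of_pairInvariant_eq {p q p' q' : ℝ × ℂ} (hp : p.1 ^ 2 + ‖p.2‖ ^ 2 = 1)
    (hq : q.1 ^ 2 + ‖q.2‖ ^ 2 = 1) (hp' : p'.1 ^ 2 + ‖p'.2‖ ^ 2 = 1)
    (hq' : q'.1 ^ 2 + ‖q'.2‖ ^ 2 = 1) (h : pairInvariant p' q' = pairInvariant p q) :
    ∃ u : ℂ, ‖u‖ = 1 ∧ p' = (p.1, u * p.2) ∧ q' = (q.1, u * q.2) := by
  have h0 : p'.1 = p.1 := by simpa [pairInvariant] using congrArg (· 0) h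
  have h1 : q'.1 = q.1 := by simpa [pairInvariant] using congrArg (· 1) h
  have h2 : p'.2 * conj q'.2 = p.2 * conj q.2 :=
    Complex.ext (by simpa [pairInvariant] using congrArg (· 2) h)
      (by simpa [pairInvariant] using congrArg (· 3) h)
  have hp2 : ‖p'.2‖ = ‖p.2‖ := by
    rw [← sq_eq_sq₀ (norm_nonneg _) (norm_nonneg _)]; rw [h0] at hp'; linarith
  have hq2 : ‖q'.2‖ = ‖q.2‖ := by
    rw [← sq_eq_sq₀ (norm_nonneg _) (norm_nonneg _)]; rw [h1] at hq'; linarith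
  obtain ⟨u, hu, e1, e2⟩ := Complex.exists_norm_eq_one_mul_eq hp2 hq2 h2
  exact ⟨u, hu, Prod.ext h0 e1, Prod.ext h1 e2⟩

instance : CompactSpace S3 := by
  have h : IsCompact {s : Quaternion ℝ | ‖s‖ = 1} := by
    simpa [Metric.sphere] using isCompact_sphere (0 : Quaternion ℝ) 1
  exact isCompact_iff_compactSpace.1 h

noncomputable def orbitInvariant (z : S3 × S3) : ℝ⁴ := pairInvariant (hopf z.1) (hopf z.2)

theorem continuous_orbitInvariant : Continuous orbitInvariant :=
  continuous_pairInvariant.comp <| .prodMap (continuous_hopf.comp continuous_subtype_val)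
    (continuous_hopf.comp continuous_subtype_val)

theorem hopf_fst_sq_add_norm_snd_sq_of_S3 (s : S3) : (hopf s).1 ^ 2 + ‖(hopf s).2‖ ^ 2 = 1 := by
  rw [hopf_fst_sq_add_norm_snd_sq, s.2, one_pow]

theorem rel15_iff_orbitInvariant_eq {z w : S3 × S3} :
    rel15 z w ↔ orbitInvariant z = orbitInvariant w := by
  constructor
  · rintro ⟨t₁, t₂, t₃, ht₁, ht₂, ht₃, e1, e2⟩
    simp only [orbitInvariant, e1, e2, mul_assoc, hopf_toQ_mul ht₁, hopf_toQ_mul ht₂,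
      hopf_mul_toQ ht₃]
    exact (pairInvariant_rotate (by rw [norm_pow, ht₃, one_pow]) _ _ _ _).symm
  · intro h
    have hS := hopf_fst_sq_add_norm_snd_sq_of_S3
    obtain ⟨u, hu, e1, e2⟩ :=
      exists_rotate_of_pairInvariant_eq (hS z.1) (hS z.2) (hS w.1) (hS w.2) h.symm
    obtain ⟨t₃, ht₃, rfl⟩ := Complex.exists_sq_eq_of_norm_eq_one hu
    obtain ⟨t₁, ht₁, f1⟩ := exists_toQ_mul_eq_of_hopf_eq (s := z.1.1 * toQ t₃) (s' := w.1.1)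
      (by rw [norm_mul, norm_toQ, ht₃, w.1.2, z.1.2, one_mul]) (by rw [hopf_mul_toQ ht₃, e1])
    obtain ⟨t₂, ht₂, f2⟩ := exists_toQ_mul_eq_of_hopf_eq (s := z.2.1 * toQ t₃) (s' := w.2.1)
      (by rw [norm_mul, norm_toQ, ht₃, w.2.2, z.2.2, one_mul]) (by rw [hopf_mul_toQ ht₃, e2])
    exact ⟨t₁, t₂, t₃, ht₁, ht₂, ht₃, by rw [f1, mul_assoc], by rw [f2, mul_assoc]⟩

def orbitModel : Set ℝ⁴ :=
  {v | v 0 ^ 2 ≤ 1 ∧ v 1 ^ 2 ≤ 1 ∧ v 2 ^ 2 + v 3 ^ 2 = (1 - v 0 ^ 2) * (1 - v 1 ^ 2)}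

theorem pairInvariant_mem_orbitModel {p q : ℝ × ℂ} (hp : p.1 ^ 2 + ‖p.2‖ ^ 2 = 1)
    (hq : q.1 ^ 2 + ‖q.2‖ ^ 2 = 1) : pairInvariant p q ∈ orbitModel := by
  have hpq := sq_norm_sub_sq_re (p.2 * conj q.2)
  rw [norm_mul, Complex.norm_conj, mul_pow] at hpq
  refine ⟨?_, ?_, ?_⟩ <;>
    simp only [pairInvariant, Matrix.cons_val, Matrix.cons_val_one, Matrix.cons_val_zero]
  · nlinarith
  · nlinarith
  · linear_combination (1 - q.1 ^ 2) * hp + ‖p.2‖ ^ 2 * hq - hpq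

theorem range_orbitInvariant : Set.range orbitInvariant = orbitModel := by
  refine Set.Subset.antisymm ?_ fun v ⟨hx, hy, hp⟩ => ?_
  · rintro _ ⟨z, rfl⟩
    exact pairInvariant_mem_orbitModel (hopf_fst_sq_add_norm_snd_sq_of_S3 z.1)
      (hopf_fst_sq_add_norm_snd_sq_of_S3 z.2)
  set p : ℂ := v 2 + v 3 * I
  have hp' : ‖p‖ = √(1 - v 0 ^ 2) * √(1 - v 1 ^ 2) := by
    rw [← Real.sqrt_mul (by linarith), ← hp, Complex.norm_add_mul_I]
  obtain ⟨c, hc, hcp⟩ := Complex.exists_norm_mul_eq_self p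
  obtain ⟨s₁, hs₁, h₁⟩ := exists_hopf_eq (x := v 0) (h := c * √(1 - v 0 ^ 2)) (by
    rw [norm_mul, hc, one_mul, Complex.norm_real, Real.norm_eq_abs, sq_abs,
      Real.sq_sqrt (by linarith)]
    ring)
  obtain ⟨s₂, hs₂, h₂⟩ := exists_hopf_eq (x := v 1) (h := √(1 - v 1 ^ 2)) (by
    rw [Complex.norm_real, Real.norm_eq_abs, sq_abs, Real.sq_sqrt (by linarith)]
    ring)
  refine ⟨(⟨s₁, hs₁⟩, ⟨s₂, hs₂⟩), ?_⟩
  have hpair : (c * √(1 - v 0 ^ 2)) * conj (√(1 - v 1 ^ 2) : ℂ) = p := by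
    rw [Complex.conj_ofReal, ← hcp, hp']; push_cast; ring
  simp only [orbitInvariant, h₁, h₂, pairInvariant, hpair]
  ext i
  fin_cases i <;> simp [p]

theorem orbitInvariant_mem_orbitModel (z : S3 × S3) : orbitInvariant z ∈ orbitModel :=
  range_orbitInvariant ▸ Set.mem_range_self z

theorem norm_sq_eq_sum_four (v : ℝ⁴) : ‖v‖ ^ 2 = v 0 ^ 2 + v 1 ^ 2 + v 2 ^ 2 + v 3 ^ 2 := by
  simp only [EuclideanSpace.norm_sq_eq, Fin.sum_univ_four, Real.norm_eq_abs, sq_abs]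

theorem norm_sq_of_mem_orbitModel {v : ℝ⁴} (hv : v ∈ orbitModel) :
    ‖v‖ ^ 2 = 1 + (v 0 * v 1) ^ 2 := by
  rw [norm_sq_eq_sum_four]; linear_combination hv.2.2

theorem eq_one_of_smul_mem_orbitModel {v : ℝ⁴} {c : ℝ} (hc : 0 < c) (hv : v ∈ orbitModel)
    (hcv : c • v ∈ orbitModel) : c = 1 := by
  have h := norm_sq_of_mem_orbitModel hcv
  rw [norm_smul, mul_pow, norm_sq_of_mem_orbitModel hv] at h
  obtain ⟨hx, hy, -⟩ := hv
  obtain ⟨hcx, hcy, -⟩ := hcv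
  simp only [PiLp.smul_apply, smul_eq_mul, Real.norm_eq_abs, sq_abs] at h hcx hcy
  set a := (v 0 * v 1) ^ 2
  have ha : a ≤ 1 := by
    simpa only [a, mul_pow] using mul_le_one₀ hx (sq_nonneg _) hy
  have hca : c ^ 4 * a ≤ 1 := by
    calc c ^ 4 * a = (c * v 0) ^ 2 * (c * v 1) ^ 2 := by ring
      _ ≤ 1 := mul_le_one₀ hcx (sq_nonneg _) hcy
  have hc2 : c ^ 2 = 1 := by
    have : (c ^ 2 - 1) * (1 - c ^ 2 * a) = 0 := by linear_combination h
    rcases mul_eq_zero.1 this with h1 | h1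
    · linarith
    · nlinarith
  nlinarith

-- `μ` is the smaller root of `(x y)² μ² - μ + 1 = 0`, written as `2 / (1 + √(1 - 4 (x y)²))`
theorem exists_root_mul_sq_le_one {x y : ℝ} (h : x ^ 2 + y ^ 2 ≤ 1) :
    ∃ μ : ℝ, 0 < μ ∧ μ = 1 + (x * y) ^ 2 * μ ^ 2 ∧ μ * x ^ 2 ≤ 1 ∧ μ * y ^ 2 ≤ 1 := by
  obtain ⟨D, hD0, hD⟩ : ∃ D : ℝ, 0 ≤ D ∧ D ^ 2 = 1 - 4 * (x * y) ^ 2 :=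
    ⟨_, Real.sqrt_nonneg _, Real.sq_sqrt (by nlinarith [sq_nonneg (x ^ 2 - y ^ 2)])⟩
  obtain ⟨μ, hμD⟩ : ∃ μ : ℝ, μ * (1 + D) = 2 := ⟨2 / (1 + D), div_mul_cancel₀ 2 (by positivity)⟩
  have hμ : 0 < μ := by nlinarith
  have hle {x' y' : ℝ} (h' : x' ^ 2 + y' ^ 2 ≤ 1) (hD' : D ^ 2 = 1 - 4 * (x' * y') ^ 2) :
      μ * x' ^ 2 ≤ 1 := by
    have : 2 * x' ^ 2 - 1 ≤ D := by nlinarith [sq_nonneg x']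
    nlinarith
  refine ⟨μ, hμ, ?_, hle h hD, hle (x' := y) (y' := x) (by linarith) (by rw [hD]; ring)⟩
  have : (μ - 1 - (x * y) ^ 2 * μ ^ 2) * (1 + D) ^ 2 = 0 := by
    linear_combination (1 + D - (x * y) ^ 2 * (μ * (1 + D) + 2)) * hμD - hD
  linarith [(mul_eq_zero.1 this).resolve_right (by positivity)]

theorem exists_smul_mem_orbitModel {u : ℝ⁴} (hu : ‖u‖ = 1) :
    ∃ c : ℝ, 0 < c ∧ c • u ∈ orbitModel := by
  have hsum : u 0 ^ 2 + u 1 ^ 2 + u 2 ^ 2 + u 3 ^ 2 = 1 := by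
    rw [← norm_sq_eq_sum_four, hu, one_pow]
  obtain ⟨μ, hμ, hroot, hx, hy⟩ :=
    exists_root_mul_sq_le_one (x := u 0) (y := u 1)
      (by nlinarith [sq_nonneg (u 2), sq_nonneg (u 3)])
  refine ⟨√μ, Real.sqrt_pos.2 hμ, ?_, ?_, ?_⟩ <;>
    simp only [PiLp.smul_apply, smul_eq_mul, mul_pow, Real.sq_sqrt hμ.le]
  · exact hx
  · exact hy
  · linear_combination μ * hsum + hroot

theorem ne_zero_of_mem_orbitModel {v : ℝ⁴} (hv : v ∈ orbitModel) : v ≠ 0 := by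
  rintro rfl
  simpa using norm_sq_of_mem_orbitModel hv

theorem bijOn_normalize_orbitModel :
    Set.BijOn (fun v : ℝ⁴ => ‖v‖⁻¹ • v) orbitModel (Metric.sphere 0 1) := by
  refine ⟨fun v hv => ?_, fun v hv w hw hvw => ?_, fun u hu => ?_⟩
  · simp [norm_smul, ne_zero_of_mem_orbitModel hv]
  · have hv0 := norm_pos_iff.2 (ne_zero_of_mem_orbitModel hv)
    have hw0 := norm_pos_iff.2 (ne_zero_of_mem_orbitModel hw)
    have hwv : w = (‖w‖ * ‖v‖⁻¹) • v := by
      simp only at hvw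
      rw [mul_smul, hvw, smul_inv_smul₀ hw0.ne']
    have := eq_one_of_smul_mem_orbitModel (by positivity) hv (hwv ▸ hw)
    rw [hwv, this, one_smul]
  · obtain ⟨c, hc, hcu⟩ := exists_smul_mem_orbitModel (mem_sphere_zero_iff_norm.1 hu)
    refine ⟨c • u, hcu, ?_⟩
    simp only [norm_smul, mem_sphere_zero_iff_norm.1 hu, Real.norm_of_nonneg hc.le, mul_one]
    rw [inv_smul_smul₀ hc.ne']

noncomputable def sphereMap (z : S3 × S3) : Metric.sphere (0 : ℝ⁴) 1 :=
  ⟨‖orbitInvariant z‖⁻¹ • orbitInvariant z,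
    bijOn_normalize_orbitModel.mapsTo (orbitInvariant_mem_orbitModel z)⟩

theorem continuous_sphereMap : Continuous sphereMap := by
  have hne (z : S3 × S3) : ‖orbitInvariant z‖ ≠ 0 :=
    norm_ne_zero_iff.2 (ne_zero_of_mem_orbitModel (orbitInvariant_mem_orbitModel z))
  exact (((continuous_norm.comp continuous_orbitInvariant).inv₀ hne).smul
    continuous_orbitInvariant).subtype_mk _

theorem surjective_sphereMap : Function.Surjective sphereMap := by
  rintro ⟨u, hu⟩
  obtain ⟨v, hv, rfl⟩ := bijOn_normalize_orbitModel.surjOn hu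
  obtain ⟨z, rfl⟩ := range_orbitInvariant.symm ▸ hv
  exact ⟨z, rfl⟩

theorem rel15_iff_sphereMap_eq {z w : S3 × S3} : rel15 z w ↔ sphereMap z = sphereMap w := by
  rw [rel15_iff_orbitInvariant_eq, sphereMap, sphereMap, Subtype.mk.injEq,
    bijOn_normalize_orbitModel.injOn.eq_iff (orbitInvariant_mem_orbitModel z)
      (orbitInvariant_mem_orbitModel w)]

/-- `(S³ × S³)/T³ ≅ S³` for the action `(t₁,t₂,t₃)·(s₁,s₂) = (t₁s₁t₃, t₂s₂t₃)`. -/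
theorem S3xS3_quotient_T3_homeomorphic_S3 :
    Nonempty (Quot rel15 ≃ₜ Metric.sphere (0 : EuclideanSpace ℝ (Fin 4)) 1) :=
  ⟨.quotOfFibers sphereMap continuous_sphereMap surjective_sphereMap
    fun _ _ => rel15_iff_sphereMap_eq⟩
end
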